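/- arXiv:2506.21217 — 7 statements merged into one kernel-verified Lean document; each statement's English description precedes it below -/
import Mathlib

section
/- Let p be a prime, k a perfect field of characteristic p, W = W(k) its ring of p-typical Witt vectors, and σ : W → W the Witt-vector Frobenius (a bijective ring endomorphism since k is perfect). Fix natural numbers r ≥ 1 and w with w ≤ r. Let M_0, …, M_{r−1} be W-modules (indices taken modulo r) together with σ-semilinear maps F_i : M_i → M_{i+1} such that for every i ≠ 0 the map F_i is bijective, and such that p^w · x lies in the image F_0(M_0) for every x ∈ M_1. Define W-submodules Ñ_0 = M_0 and, for 1 ≤ i ≤ r−1, Ñ_i = (F_{i−1} ∘ ⋯ ∘ F_0)(M_0) + p^{max(w−i,0)} · M_i ⊆ M_i. Then for every i ∈ {0,…,r−1} (indices cyclic, Ñ_r = Ñ_0) one has F_i(Ñ_i) ⊆ Ñ_{i+1} and p · Ñ_{i+1} ⊆ F_i(Ñ_i); that is, p·Ñ ⊆ F(Ñ) ⊆ Ñ, so Ñ equipped with the restriction of F is a graded Dieudonné module. -/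
/-!
Write `Ñ n = P n + p^(w-n) M n` uniformly for `0 ≤ n < r` (at `n = 0` both sides are `M 0`).
Since `σ p = p`, each `F n` commutes with multiplication by powers of `p`, so
`F n (Ñ n) = P (n+1) + p^(w-n) F n (M n) ⊆ Ñ (n+1)`. The inclusion `p Ñ (n+1) ⊆ F n (Ñ n)` rests on
`p^(w-n) M (n+1) ⊆ F n (Ñ n)`: for `n = 0` this is the hypothesis `p^w M 1 ⊆ F 0 (M 0)`, for
`n ≠ 0` it follows from the surjectivity of `F n`. At the wrap-around `n = r - 1` one has
`Ñ r = M 0`, and `w - n ≤ 1` gives `p M 0 ⊆ p^(w-n) M 0 ⊆ F n (Ñ n)`.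
-/

open Pointwise

/-- The Witt-vector Frobenius is surjective over a perfect field, so semilinear
`Submodule.map` is available. -/
instance wittFrobeniusSurjective (p : ℕ) [Fact p.Prime] (k : Type*) [Field k]
    [CharP k p] [PerfectRing k p] :
    RingHomSurjective (WittVector.frobenius : WittVector p k →+* WittVector p k) :=
  ⟨(WittVector.frobenius_bijective p k).surjective⟩

namespace Submodule

variable {R A B : Type*} [CommRing R] [AddCommGroup A] [Module R A] [AddCommGroup B] [Module R B]

theorem pow_smul_le_pow_smul (c : R) {a b : ℕ} (hba : b ≤ a) (S : Submodule R A) :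
    c ^ a • S ≤ c ^ b • S := by
  obtain ⟨d, rfl⟩ := Nat.exists_eq_add_of_le hba
  rw [pow_add, mul_smul]
  exact smul_mono_right _ (smul_le_self_of_tower _ _)

theorem pointwise_smul_top_le_of_forall_smul_mem (c : R) {S : Submodule R A}
    (h : ∀ x, c • x ∈ S) : c • (⊤ : Submodule R A) ≤ S := by
  rintro _ ⟨x, -, rfl⟩
  exact h x

variable {σ : R →+* R} [RingHomSurjective σ] (f : A →ₛₗ[σ] B) {c : R}

theorem map_pointwise_smul_of_apply_eq (hc : σ c = c) (S : Submodule R A) :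
    (c • S).map f = c • S.map f := by
  ext y
  simp only [mem_map, mem_smul_pointwise_iff_exists]
  constructor
  · rintro ⟨_, ⟨x, hx, rfl⟩, rfl⟩
    exact ⟨f x, ⟨x, hx, rfl⟩, by rw [map_smulₛₗ, hc]⟩
  · rintro ⟨_, ⟨x, hx, rfl⟩, rfl⟩
    exact ⟨c • x, ⟨x, hx, rfl⟩, by rw [map_smulₛₗ, hc]⟩

theorem map_pointwise_smul_top_of_surjective (hc : σ c = c) (hf : Function.Surjective f) :
    (c • ⊤ : Submodule R A).map f = c • ⊤ := by
  rw [map_pointwise_smul_of_apply_eq f hc, map_top, LinearMap.range_eq_top.mpr hf]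

theorem map_sup_pow_smul_top_le (hc : σ c = c) {P : Submodule R A} {Q : Submodule R B}
    (hPQ : P.map f ≤ Q) {e e' : ℕ} (he : e' ≤ e) :
    (P ⊔ c ^ e • ⊤).map f ≤ Q ⊔ c ^ e' • ⊤ := by
  rw [map_sup, map_pointwise_smul_of_apply_eq f (by rw [map_pow, hc])]
  exact sup_le_sup hPQ ((smul_mono_right _ le_top).trans (pow_smul_le_pow_smul c he ⊤))

theorem smul_sup_pow_smul_top_le {N : Submodule R A} {Q : Submodule R B} (hQ : Q ≤ N.map f)
    {e e' : ℕ} (he : e ≤ e' + 1) (hcover : c ^ e • ⊤ ≤ N.map f) :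
    c • (Q ⊔ c ^ e' • ⊤) ≤ N.map f := by
  rw [smul_sup', ← mul_smul, ← pow_succ']
  exact sup_le ((smul_le_self_of_tower c Q).trans hQ) ((pow_smul_le_pow_smul c he ⊤).trans hcover)

end Submodule

/-- **Characteristic-p Dieudonnéfication.**
Let `k` be a perfect field of characteristic `p`, `W = W(k)` its Witt vectors with
Frobenius `σ`, `r ≥ 1`, `w ≤ r`.  Given `W`-modules `M i` (`i ∈ ℤ/r`) with
`σ`-semilinear maps `F i : M i → M (i+1)` that are bijective for `i ≠ 0` and satisfy
`p^w • M 1 ⊆ F 0 (M 0)`, define `Ñ 0 = M 0` and, for `1 ≤ i ≤ r-1`,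
`Ñ i = (F (i-1) ∘ ⋯ ∘ F 0)(M 0) + p^(max (w-i) 0) • M i`.
Then for all `i` (cyclically): `F i (Ñ i) ⊆ Ñ (i+1)` and `p • Ñ (i+1) ⊆ F i (Ñ i)`,
i.e. `Ñ` with the restriction of `F` is a graded Dieudonné module. -/
theorem char_p_dieudonnefication
    (p : ℕ) [Fact p.Prime]
    (k : Type*) [Field k] [CharP k p] [PerfectRing k p]
    (r w : ℕ) (hr : 1 ≤ r) (hw : w ≤ r)
    (M : ZMod r → Type*) [∀ i, AddCommGroup (M i)]
    [∀ i, Module (WittVector p k) (M i)]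
    (F : ∀ i : ZMod r,
      M i →ₛₗ[(WittVector.frobenius : WittVector p k →+* WittVector p k)] M (i + 1))
    (hbij : ∀ i : ZMod r, i ≠ 0 → Function.Bijective (F i))
    (hdiv : ∀ x : M ((0 : ZMod r) + 1), (p : WittVector p k) ^ w • x ∈ Submodule.map (F 0) ⊤)
    -- `P i` is the image of `M 0` under the composite `F (i-1) ∘ ⋯ ∘ F 0`
    (P : ∀ i : ZMod r, Submodule (WittVector p k) (M i))
    (hP0 : P 0 = ⊤)
    (hPsucc : ∀ i : ℕ, i + 1 ≤ r - 1 →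
      P ((i : ZMod r) + 1) = Submodule.map (F (i : ZMod r)) (P (i : ZMod r)))
    -- the graded Dieudonné module `Ñ`
    (Nt : ∀ i : ZMod r, Submodule (WittVector p k) (M i))
    (hN0 : Nt 0 = ⊤)
    (hNi : ∀ i : ℕ, 1 ≤ i → i ≤ r - 1 →
      Nt (i : ZMod r) = P (i : ZMod r) ⊔
        (p : WittVector p k) ^ (w - i) • (⊤ : Submodule (WittVector p k) (M (i : ZMod r)))) :
    ∀ i : ZMod r,
      Submodule.map (F i) (Nt i) ≤ Nt (i + 1) ∧
      (p : WittVector p k) • Nt (i + 1) ≤ Submodule.map (F i) (Nt i) := by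
  have : NeZero r := ⟨by omega⟩
  have hσp : WittVector.frobenius (p : WittVector p k) = p := map_natCast _ p
  have hNt : ∀ n : ℕ, n < r → Nt n = P n ⊔ (p : WittVector p k) ^ (w - n) • ⊤ := by
    rintro (_ | n) hn
    · rw [Nat.cast_zero, hN0, hP0, top_sup_eq]
    · exact hNi _ (by omega) (by omega)
  have hcover : ∀ n : ℕ, n < r → (p : WittVector p k) ^ (w - n) • ⊤ ≤ (Nt n).map (F n) := by
    rintro (_ | n) hn
    · rw [Nat.cast_zero, hN0, Nat.sub_zero]
      exact Submodule.pointwise_smul_top_le_of_forall_smul_mem _ hdiv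
    · have hn0 : ((n + 1 : ℕ) : ZMod r) ≠ 0 := by
        rw [Ne, ZMod.natCast_eq_zero_iff]
        exact Nat.not_dvd_of_pos_of_lt n.succ_pos hn
      rw [← Submodule.map_pointwise_smul_top_of_surjective _ (by rw [map_pow, hσp])
        (hbij _ hn0).surjective, hNt _ hn]
      exact Submodule.map_mono le_sup_right
  intro i
  obtain ⟨n, hn, rfl⟩ : ∃ n < r, (n : ZMod r) = i := ⟨i.val, i.val_lt, i.natCast_zmod_val⟩
  rcases (show n + 1 < r ∨ n + 1 = r by omega) with hlt | rfl
  · have hNt1 := hNt (n + 1) hlt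
    rw [Nat.cast_succ, hPsucc n (by omega)] at hNt1
    rw [hNt1, hNt n hn]
    exact ⟨Submodule.map_sup_pow_smul_top_le _ hσp le_rfl (by omega),
      Submodule.smul_sup_pow_smul_top_le _ (Submodule.map_mono le_sup_left) (by omega)
        (hNt n hn ▸ hcover n hn)⟩
  · have hN1 : Nt ((n : ZMod (n + 1)) + 1) = ⊤ := by rw [← Nat.cast_succ, ZMod.natCast_self, hN0]
    refine ⟨hN1 ▸ le_top, hN1 ▸ ?_⟩
    rw [← pow_one (p : WittVector p k)]
    exact (Submodule.pow_smul_le_pow_smul _ (by omega) ⊤).trans (hcover n hn)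
end

section
/- Let A be a commutative ring, σ : A → A a ring endomorphism, d ∈ A with σ(d) a non-zero-divisor in A, N a natural number, and let m, n : Fin N → ℤ be monotone (non-decreasing) weight vectors. Suppose an N×N matrix k over A satisfies the Nygaard condition for (d, m+n), and suppose X is the μ-twist of k at d, i.e. d^{max(m j − m i, 0)} · (X i j) = d^{max(m i − m j, 0)} · σ(k i j) for all i, j. Then X satisfies the Nygaard condition for (σ(d), n): for all i, j, σ(d)^{max(n j − n i, 0)} divides σ(X i j). (This is part (ii) of the paper's Lemma on display groups: Φ^μ_d(GL_N^{μ+η}(A,d)) ⊆ GL_N^{η}(A, σ(d)).) -/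
/-! For `i ≤ j` all weight differences are non-negative, so the twist relation reads
`d ^ a * X i j = σ (k i j)` with `a = m j - m i`, while `d ^ (a + b)` divides `σ (k i j)`,
`b = n j - n i`. Only `σ d` is a non-zero-divisor, so one applies `σ` before cancelling
`σ d ^ a`, which leaves `σ d ^ b ∣ σ (X i j)`. For `j ≤ i` the exponent `b` vanishes. -/

/-- An `N×N` matrix `k` over `A` satisfies the **Nygaard condition** for `(d, m)` if
for all `i, j` the element `σ (k i j)` is divisible by `d ^ max (m j - m i) 0`.
This is the defining condition of the prismatic display group `GL_N^μ(A,(d))` for the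
diagonal cocharacter `μ(z) = diag (z^(m 1), …, z^(m N))`. -/
def NygaardCond {A : Type*} [CommRing A] (σ : A →+* A) (d : A) {N : ℕ}
    (m : Fin N → ℤ) (k : Matrix (Fin N) (Fin N) A) : Prop :=
  ∀ i j, d ^ (m j - m i).toNat ∣ σ (k i j)

/-- A matrix `X` over `A` is the **μ-twist** of `k` at `d` (for weights `m`) if
`d ^ max (m j - m i) 0 * X i j = d ^ max (m i - m j) 0 * σ (k i j)` for all `i, j`;
when `d` is a non-zero-divisor this characterizes `X = μ(d) σ(k) μ(d)⁻¹ = Φ^μ_d(k)`. -/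
def IsTwist {A : Type*} [CommRing A] (σ : A →+* A) (d : A) {N : ℕ}
    (m : Fin N → ℤ) (k X : Matrix (Fin N) (Fin N) A) : Prop :=
  ∀ i j, d ^ (m j - m i).toNat * X i j = d ^ (m i - m j).toNat * σ (k i j)

theorem RingHom.pow_dvd_map_of_pow_mul_eq {R S : Type*} [CommRing R] [CommRing S]
    (f : R →+* S) {d x y : R} {a b : ℕ} (hfd : f d ∈ nonZeroDivisors S)
    (hy : d ^ (a + b) ∣ y) (hxy : d ^ a * x = y) : f d ^ b ∣ f x := by
  have hdvd : f d ^ a * f d ^ b ∣ f d ^ a * f x := by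
    simpa only [← pow_add, ← map_pow, ← map_mul, hxy] using map_dvd f hy
  exact (dvd_cancel_left_mem_nonZeroDivisors (pow_mem hfd a)).mp hdvd

theorem IsTwist.pow_mul_eq_of_le {A : Type*} [CommRing A] {σ : A →+* A} {d : A} {N : ℕ}
    {m : Fin N → ℤ} {k X : Matrix (Fin N) (Fin N) A} (hX : IsTwist σ d m k X) {i j : Fin N}
    (hm : m i ≤ m j) : d ^ (m j - m i).toNat * X i j = σ (k i j) := by
  simpa only [Int.toNat_of_nonpos (sub_nonpos.2 hm), pow_zero, one_mul] using hX i j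

/-- Part (ii) of the Lemma on display groups:
`Φ^μ_d(GL_N^{μ+η}(A,d)) ⊆ GL_N^{η}(A, σ(d))` for monotone weight vectors. -/
theorem twist_nygaard {A : Type*} [CommRing A] (σ : A →+* A) (d : A)
    (hσd : σ d ∈ nonZeroDivisors A) {N : ℕ}
    (m n : Fin N → ℤ) (hm : Monotone m) (hn : Monotone n)
    (k X : Matrix (Fin N) (Fin N) A)
    (hk : NygaardCond σ d (fun j => m j + n j) k)
    (hX : IsTwist σ d m k X) :
    NygaardCond σ (σ d) n X := by
  intro i j
  rcases le_total j i with hji | hij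
  · simp only [Int.toNat_of_nonpos (sub_nonpos.2 (hn hji)), pow_zero, one_dvd]
  · have hmij := hm hij
    have hnij := hn hij
    have hsplit : (m j + n j - (m i + n i)).toNat = (m j - m i).toNat + (n j - n i).toNat := by
      omega
    refine σ.pow_dvd_map_of_pow_mul_eq hσd ?_ (hX.pow_mul_eq_of_le hmij)
    simpa only [hsplit] using hk i j
end

section
/- Let A be a commutative ring, σ : A → A a ring endomorphism, d ∈ A with σ(d) a non-zero-divisor in A, N a natural number, and let m, n : Fin N → ℤ be monotone (non-decreasing) weight vectors. Let k be an N×N matrix over A. Suppose X is the μ-twist of k at d (for weights m), Y is the η-twist of X at σ(d) (for weights n), and Z is the (μ+η)-twist of k at d (for weights m+n). Then Y i j = σ(Z i j) for all i, j; that is, Φ^η_{σ(d)} ∘ Φ^μ_d = σ ∘ Φ^{μ+η}_d. (This is part (iii) of the paper's Lemma on display groups.) -/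
section Entries

variable {A : Type*} [CommRing A] {σ : A →+* A} {d x y z k : A} {a b : ℕ}

theorem twist_twist_upper_entry (hσd : IsLeftRegular (σ d))
    (hx : d ^ a * x = σ k) (hy : σ d ^ b * y = σ x) (hz : d ^ (a + b) * z = σ k) :
    y = σ z :=
  hσd.pow (a + b) <| calc
    σ d ^ (a + b) * y = σ (d ^ a * x) := by rw [pow_add, mul_assoc, hy, map_mul, map_pow]
    _ = σ (d ^ (a + b) * z) := by rw [hx, hz]
    _ = σ d ^ (a + b) * σ z := by rw [map_mul, map_pow]

theorem twist_twist_lower_entry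
    (hx : x = d ^ a * σ k) (hy : y = σ d ^ b * σ x) (hz : z = d ^ (a + b) * σ k) :
    y = σ z := by
  rw [hy, hx, hz, map_mul, map_mul, map_pow, map_pow, pow_add]
  ring

end Entries

namespace IsTwist

variable {A : Type*} [CommRing A] {σ : A →+* A} {d : A} {N : ℕ} {m : Fin N → ℤ}
  {k X : Matrix (Fin N) (Fin N) A}

theorem pow_mul_apply_of_le (hX : IsTwist σ d m k X) {i j : Fin N} (h : m i ≤ m j) :
    d ^ (m j - m i).toNat * X i j = σ (k i j) := by
  simpa [Int.toNat_eq_zero.mpr (sub_nonpos.mpr h)] using hX i j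

theorem apply_of_ge (hX : IsTwist σ d m k X) {i j : Fin N} (h : m j ≤ m i) :
    X i j = d ^ (m i - m j).toNat * σ (k i j) := by
  simpa [Int.toNat_eq_zero.mpr (sub_nonpos.mpr h)] using hX i j

end IsTwist

/-- Part (iii) of the Lemma on display groups:
`Φ^η_{σ(d)} ∘ Φ^μ_d = σ ∘ Φ^{μ+η}_d` for monotone weight vectors. -/
theorem twist_twist_eq_sigma_twist {A : Type*} [CommRing A] (σ : A →+* A) (d : A)
    (hσd : σ d ∈ nonZeroDivisors A) {N : ℕ}
    (m n : Fin N → ℤ) (hm : Monotone m) (hn : Monotone n)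
    (k X Y Z : Matrix (Fin N) (Fin N) A)
    (hX : IsTwist σ d m k X)
    (hY : IsTwist σ (σ d) n X Y)
    (hZ : IsTwist σ d (fun j => m j + n j) k Z) :
    ∀ i j, Y i j = σ (Z i j) := by
  intro i j
  rcases le_total i j with h | h
  · have hmn : (m j + n j - (m i + n i)).toNat = (m j - m i).toNat + (n j - n i).toNat := by
      have := hm h; have := hn h; omega
    refine twist_twist_upper_entry (isRegular_iff_mem_nonZeroDivisors.mpr hσd).left
      (hX.pow_mul_apply_of_le (hm h)) (hY.pow_mul_apply_of_le (hn h)) ?_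
    rw [← hmn]
    exact hZ.pow_mul_apply_of_le (add_le_add (hm h) (hn h))
  · have hmn : (m i + n i - (m j + n j)).toNat = (m i - m j).toNat + (n i - n j).toNat := by
      have := hm h; have := hn h; omega
    refine twist_twist_lower_entry (hX.apply_of_ge (hm h)) (hY.apply_of_ge (hn h)) ?_
    rw [← hmn]
    exact hZ.apply_of_ge (add_le_add (hm h) (hn h))
end

section
/- Let A be a commutative ring, σ : A → A a ring endomorphism, d ∈ A a non-zero-divisor, N a natural number, and m : Fin N → ℤ a weight vector. If an N×N matrix k over A satisfies the Nygaard condition for (d, m), then there exists a unique matrix X over A which is the μ-twist of k at d, i.e. satisfying d^{max(m j − m i, 0)} · (X i j) = d^{max(m i − m j, 0)} · σ(k i j) for all i, j; moreover det X = σ(det k). In particular, if k is invertible over A then so is X. (This is the well-definedness of the display map Φ^μ_d : GL_N^μ(A,(d)) → GL_N(A), k ↦ μ(d)σ(k)μ(d)^{−1}, i.e. the claim that Φ^μ_d(k) in fact lies in GL_N(A).) -/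
open Matrix

section

variable {A : Type*} [CommRing A] {σ : A →+* A} {d : A} {N : ℕ} {m : Fin N → ℤ}
  {k : Matrix (Fin N) (Fin N) A}

theorem exists_isTwist_of_nygaardCond (hk : NygaardCond σ d m k) :
    ∃ X, IsTwist σ d m k X := by
  choose q hq using hk
  refine ⟨Matrix.of fun i j => d ^ (m i - m j).toNat * q i j, fun i j => ?_⟩
  rw [of_apply, mul_left_comm, ← hq]

theorem IsTwist.eq (hd : d ∈ nonZeroDivisors A) {X Y : Matrix (Fin N) (Fin N) A}
    (hX : IsTwist σ d m k X) (hY : IsTwist σ d m k Y) : X = Y := by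
  ext i j
  exact (mul_cancel_left_mem_nonZeroDivisors (pow_mem hd _)).mp ((hX i j).trans (hY i j).symm)

theorem IsTwist.mul_diagonal_pow_eq {X : Matrix (Fin N) (Fin N) A} (hX : IsTwist σ d m k X)
    {c : Fin N → ℕ} {b : ℤ} (hc : ∀ i, (c i : ℤ) = m i - b) :
    X * diagonal (fun i => d ^ c i) = diagonal (fun i => d ^ c i) * k.map σ := by
  ext i j
  obtain ⟨e, hcj, hci⟩ : ∃ e, c j = (m j - m i).toNat + e ∧ c i = (m i - m j).toNat + e :=
    ⟨min (c i) (c j), by grind, by grind⟩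
  rw [mul_diagonal, diagonal_mul, map_apply, hcj, hci, pow_add, pow_add]
  linear_combination d ^ e * hX i j

theorem IsTwist.det_eq (hd : d ∈ nonZeroDivisors A) {X : Matrix (Fin N) (Fin N) A}
    (hX : IsTwist σ d m k X) : X.det = σ k.det := by
  obtain ⟨b, hb⟩ := Finite.exists_le (fun i => -m i)
  set D := diagonal fun i => d ^ (m i + b).toNat
  have hXD : X * D = D * k.map σ := hX.mul_diagonal_pow_eq (b := -b) fun i => by grind
  have hD : D.det ∈ nonZeroDivisors A := by
    rw [det_diagonal, Finset.prod_pow_eq_pow_sum]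
    exact pow_mem hd _
  have := congrArg det hXD
  rw [det_mul, det_mul, mul_comm] at this
  rw [RingHom.map_det]
  exact (mul_cancel_left_mem_nonZeroDivisors hD).mp this

end

/-- Well-definedness of the display map `Φ^μ_d : GL_N^μ(A,(d)) → GL_N(A)`:
if `d` is a non-zero-divisor and `k` satisfies the Nygaard condition for `(d, m)`,
then there is a unique μ-twist `X` of `k` at `d`; moreover `det X = σ (det k)`, and
if `k` is invertible then so is `X`. -/
theorem twist_existsUnique_det {A : Type*} [CommRing A] (σ : A →+* A) (d : A)
    (hd : d ∈ nonZeroDivisors A) {N : ℕ}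
    (m : Fin N → ℤ) (k : Matrix (Fin N) (Fin N) A)
    (hk : NygaardCond σ d m k) :
    (∃! X : Matrix (Fin N) (Fin N) A, IsTwist σ d m k X) ∧
    ∀ X : Matrix (Fin N) (Fin N) A, IsTwist σ d m k X →
      X.det = σ k.det ∧ (IsUnit k → IsUnit X) := by
  obtain ⟨X₀, hX₀⟩ := exists_isTwist_of_nygaardCond hk
  refine ⟨⟨X₀, hX₀, fun Y hY => hY.eq hd hX₀⟩, fun X hX => ⟨hX.det_eq hd, fun hu => ?_⟩⟩
  rw [isUnit_iff_isUnit_det] at hu ⊢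
  rw [hX.det_eq hd]
  exact hu.map σ
end

section
/- Let A be a commutative ring, σ : A → A a ring endomorphism, d ∈ A, N a natural number, and m : Fin N → ℤ a weight vector. The set of invertible N×N matrices over A satisfying the Nygaard condition for (d, m) is a subgroup of GL_N(A): (1) the identity matrix satisfies the condition; (2) if k and k' satisfy the condition then so does the product k·k'; (3) if k is invertible and satisfies the condition then so does k^{−1}. (This is the claim that the prismatic display group GL_N^μ(A,(d)) is a subgroup of GL_N(A); no monotonicity assumption on m is needed.) -/
/-!
The Nygaard condition says that `σ k` lies in the set of matrices whose `(i, j)` entry is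
divisible by `d ^ (m j - m i)⁺`. Such weight conditions `d ^ (c j - r i)⁺ ∣ M i j`, with
independent row weights `r` and column weights `c`, compose under products because
`(c - r)⁺ ≤ (s - r)⁺ + (c - s)⁺`, and each term of the Leibniz expansion of `det M` is
divisible by `d ^ (∑ c - ∑ r)⁺`. Applied to the minors of `M`, this shows that the adjugate of
a matrix with square weights `r = c = m` again satisfies the condition; since `σ` commutes
with adjugates and `k⁻¹ = (det k)⁻¹ • adj k`, the inverse does too.
-/

namespace Matrix

variable {n : Type*} {R : Type*} [CommRing R]

def WeightDvd (d : R) (r c : n → ℤ) (M : Matrix n n R) : Prop :=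
  ∀ i j, d ^ (c j - r i).toNat ∣ M i j

variable {d : R} {r s c : n → ℤ}

theorem weightDvd_one [DecidableEq n] (w : n → ℤ) : WeightDvd d w w (1 : Matrix n n R) := by
  intro i j
  by_cases hij : i = j
  · simp [hij]
  · simp [one_apply_ne hij]

theorem WeightDvd.mul [Fintype n] {M M' : Matrix n n R} (hM : WeightDvd d r s M)
    (hM' : WeightDvd d s c M') :
    WeightDvd d r c (M * M') := by
  intro i j
  refine Finset.dvd_sum fun l _ => ?_
  have hle : (c j - r i).toNat ≤ (s l - r i).toNat + (c j - s l).toNat := by omega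
  exact (pow_dvd_pow d hle).trans (pow_add d _ _ ▸ mul_dvd_mul (hM i l) (hM' l j))

theorem WeightDvd.smul {M : Matrix n n R} (hM : WeightDvd d r c M) (a : R) :
    WeightDvd d r c (a • M) :=
  fun i j => (hM i j).mul_left a

theorem WeightDvd.dvd_det [Fintype n] [DecidableEq n] {M : Matrix n n R}
    (hM : WeightDvd d r c M) :
    d ^ (∑ j, c j - ∑ i, r i).toNat ∣ M.det := by
  rw [det_apply]
  refine Finset.dvd_sum fun π _ => ?_
  rw [Units.smul_def, zsmul_eq_mul]
  refine Dvd.dvd.mul_left ?_ _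
  have hsum : ∑ j, c j - ∑ i, r i = ∑ i, (c i - r (π i)) := by
    rw [Finset.sum_sub_distrib, Equiv.sum_comp π r]
  have hle : (∑ j, c j - ∑ i, r i).toNat ≤ ∑ i, (c i - r (π i)).toNat := by
    rw [hsum, Int.toNat_le]
    push_cast
    exact Finset.sum_le_sum fun i _ => Int.self_le_toNat _
  refine (pow_dvd_pow d hle).trans ?_
  rw [← Finset.prod_pow_eq_pow_sum]
  exact Finset.prod_dvd_prod_of_dvd _ _ fun i _ => hM _ i

theorem WeightDvd.dvd_adjugate_apply [Fintype n] [DecidableEq n] {M : Matrix n n R}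
    (hM : WeightDvd d r c M) (i j : n) :
    d ^ (∑ l, c l - ∑ l, r l + r j - c i).toNat ∣ M.adjugate i j := by
  rw [adjugate_apply]
  -- giving row `j` the weight `c i` makes the unit vector `Pi.single i 1` admissible there
  have hrow : WeightDvd d (Function.update r j (c i)) c (M.updateRow j (Pi.single i 1)) := by
    intro a b
    by_cases haj : a = j
    · subst haj
      by_cases hbi : b = i <;> simp [hbi]
    · rw [updateRow_ne haj, Function.update_of_ne haj]
      exact hM a b
  convert hrow.dvd_det using 3
  rw [Finset.sum_update_of_mem (Finset.mem_univ j), Finset.sdiff_singleton_eq_erase,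
    ← Finset.add_sum_erase _ r (Finset.mem_univ j)]
  ring

theorem WeightDvd.adjugate [Fintype n] [DecidableEq n] {w : n → ℤ} {M : Matrix n n R}
    (hM : WeightDvd d w w M) : WeightDvd d w w M.adjugate := by
  intro i j
  simpa using hM.dvd_adjugate_apply i j

end Matrix

open Matrix

theorem nygaardCond_iff_weightDvd_mapMatrix {A : Type*} [CommRing A] (σ : A →+* A) (d : A)
    {N : ℕ} (m : Fin N → ℤ) (k : Matrix (Fin N) (Fin N) A) :
    NygaardCond σ d m k ↔ WeightDvd d m m (σ.mapMatrix k) :=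
  Iff.rfl

theorem RingHom.mapMatrix_inv_eq_smul_adjugate {R S : Type*} [CommRing R] [CommRing S]
    {n : Type*} [Fintype n] [DecidableEq n] (f : R →+* S) (M : Matrix n n R) :
    f.mapMatrix M⁻¹ = f (Ring.inverse M.det) • (f.mapMatrix M).adjugate := by
  rw [inv_def, ← f.map_adjugate]
  ext i j
  simp

/-- The prismatic display group `GL_N^μ(A,(d))` is a subgroup of `GL_N(A)`:
the identity satisfies the Nygaard condition, the condition is closed under
products, and it is closed under inverses of invertible matrices. -/
theorem nygaard_subgroup {A : Type*} [CommRing A] (σ : A →+* A) (d : A) {N : ℕ}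
    (m : Fin N → ℤ) :
    NygaardCond σ d m (1 : Matrix (Fin N) (Fin N) A) ∧
    (∀ k k' : Matrix (Fin N) (Fin N) A,
      NygaardCond σ d m k → NygaardCond σ d m k' → NygaardCond σ d m (k * k')) ∧
    (∀ k : Matrix (Fin N) (Fin N) A,
      IsUnit k → NygaardCond σ d m k → NygaardCond σ d m k⁻¹) := by
  simp only [nygaardCond_iff_weightDvd_mapMatrix, map_one, map_mul]
  refine ⟨weightDvd_one m, fun k k' hk hk' => hk.mul hk', fun k _ hk => ?_⟩
  rw [RingHom.mapMatrix_inv_eq_smul_adjugate]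
  exact hk.adjugate.smul _
end

section
/- Let A be a commutative ring, σ : A → A a ring endomorphism, d ∈ A a non-zero-divisor, N a natural number, and m : Fin N → ℤ a weight vector. Suppose k and k' are N×N matrices over A satisfying the Nygaard condition for (d, m), and suppose X, X', X'' are the μ-twists at d of k, k', and the product k·k' respectively. Then X'' = X · X'. (This expresses that the display map Φ^μ_d : GL_N^μ(A,(d)) → GL_N(A), k ↦ μ(d)σ(k)μ(d)^{−1}, is multiplicative, which is needed for the Φ^μ-conjugation action defining banal graded prismatic displays.) -/
theorem Int.toNat_sub_add_toNat_sub_add_toNat_sub_comm (a b c : ℤ) :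
    (b - a).toNat + (a - c).toNat + (c - b).toNat
      = (a - b).toNat + (c - a).toNat + (b - c).toNat := by
  omega

theorem pow_toNat_sub_mul_mul_pow_toNat_sub_comm {M : Type*} [CommMonoid M] (d : M)
    (a b c : ℤ) (u v : M) :
    d ^ (b - a).toNat * (d ^ (a - c).toNat * u * (d ^ (c - b).toNat * v))
      = d ^ (a - b).toNat * (d ^ (c - a).toNat * u * (d ^ (b - c).toNat * v)) := by
  calc _ = d ^ ((b - a).toNat + (a - c).toNat + (c - b).toNat) * (u * v) := by
        simp only [pow_add]; ac_rfl
    _ = d ^ ((a - b).toNat + (c - a).toNat + (b - c).toNat) * (u * v) := by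
      rw [Int.toNat_sub_add_toNat_sub_add_toNat_sub_comm]
    _ = _ := by simp only [pow_add]; ac_rfl

theorem IsTwist.eq_pow_mul {A : Type*} [CommRing A] {σ : A →+* A} {d : A}
    (hd : d ∈ nonZeroDivisors A) {N : ℕ} {m : Fin N → ℤ} {k X κ : Matrix (Fin N) (Fin N) A}
    (hX : IsTwist σ d m k X)
    (hκ : ∀ i j, σ (k i j) = d ^ (m j - m i).toNat * κ i j) (i j : Fin N) :
    X i j = d ^ (m i - m j).toNat * κ i j := by
  rw [← mul_cancel_left_mem_nonZeroDivisors (pow_mem hd (m j - m i).toNat), hX i j, hκ i j]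
  ring

/-- Multiplicativity of the display map `Φ^μ_d`: if `X, X', X''` are the μ-twists at
`d` of `k`, `k'` and `k * k'` respectively, then `X'' = X * X'`. -/
theorem twist_mul {A : Type*} [CommRing A] (σ : A →+* A) (d : A)
    (hd : d ∈ nonZeroDivisors A) {N : ℕ}
    (m : Fin N → ℤ) (k k' X X' X'' : Matrix (Fin N) (Fin N) A)
    (hk : NygaardCond σ d m k) (hk' : NygaardCond σ d m k')
    (hX : IsTwist σ d m k X) (hX' : IsTwist σ d m k' X')
    (hX'' : IsTwist σ d m (k * k') X'') :
    X'' = X * X' := by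
  choose κ hκ using hk
  choose κ' hκ' using hk'
  ext i j
  rw [← mul_cancel_left_mem_nonZeroDivisors (pow_mem hd (m j - m i).toNat), hX'' i j]
  simp only [Matrix.mul_apply, map_sum, map_mul, Finset.mul_sum, hX.eq_pow_mul hd hκ,
    hX'.eq_pow_mul hd hκ', hκ, hκ']
  exact Finset.sum_congr rfl fun l _ =>
    (pow_toNat_sub_mul_mul_pow_toNat_sub_comm d (m i) (m j) (m l) _ _).symm
end

section
/- Let m and s be positive natural numbers with m odd, set r = m·s, and fix g ∈ ℤ/rℤ. For x ∈ ℤ/rℤ write x.val ∈ {0, …, r−1} for its standard representative. Then for every w ∈ ℤ/rℤ there is exactly one w' ∈ ℤ/rℤ such that (w − w').val = ((w' − 1 − g).val mod m). In particular there is at most one such w', so the sparse datum with Γ = {g, g+m, g+2m, …, g+(s−1)m} ⊆ ℤ/rℤ is regular. -/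
/-!
With `c = w - 1 - g` and `d = w - w'` one has `w' - 1 - g = c - d`, and since `m ∣ r` the
residue of `(c - d).val` modulo `m` is that of `c.val - d.val`. So `w'` is a solution exactly when
`d.val < m` and `2 * d.val ≡ c.val [MOD m]`; as `m` is odd, `2` is invertible modulo `m`, which
pins down `d.val`, hence `w'`.
-/

theorem Nat.existsUnique_lt_two_mul_modEq {m : ℕ} (hodd : Odd m) (a : ℕ) :
    ∃! t, t < m ∧ 2 * t ≡ a [MOD m] := by
  have h2 : 2 * ((m + 1) / 2) = m + 1 := by
    obtain ⟨k, rfl⟩ := hodd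
    omega
  have hhalf : 2 * ((m + 1) / 2 * a % m) ≡ a [MOD m] :=
    calc 2 * ((m + 1) / 2 * a % m) ≡ 2 * ((m + 1) / 2 * a) [MOD m] :=
          (Nat.mod_modEq _ m).mul_left 2
      _ = m * a + a := by rw [← mul_assoc, h2, add_mul, one_mul]
      _ ≡ a [MOD m] := by simp [Nat.ModEq]
  refine ⟨_, ⟨Nat.mod_lt _ hodd.pos, hhalf⟩, fun t ⟨htm, ht⟩ => ?_⟩
  exact Nat.ModEq.eq_of_lt_of_lt (Nat.ModEq.cancel_left_of_coprime
    (Nat.coprime_two_right.mpr hodd) (ht.trans hhalf.symm)) htm (Nat.mod_lt _ hodd.pos)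

theorem ZMod.val_add_modEq_of_dvd {n m : ℕ} [NeZero n] (hmn : m ∣ n) (a b : ZMod n) :
    (a + b).val ≡ a.val + b.val [MOD m] := by
  rw [ZMod.val_add]
  exact Nat.mod_mod_of_dvd _ hmn

theorem ZMod.val_eq_val_sub_mod_iff {n m : ℕ} [NeZero n] (hmn : m ∣ n) (c d : ZMod n) :
    d.val = (c - d).val % m ↔ d.val < m ∧ 2 * d.val ≡ c.val [MOD m] := by
  have hm : 0 < m := Nat.pos_of_dvd_of_pos hmn (NeZero.pos n)
  have hsum : (c - d).val + d.val ≡ c.val [MOD m] := by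
    simpa using (ZMod.val_add_modEq_of_dvd hmn (c - d) d).symm
  constructor
  · intro h
    refine ⟨h ▸ Nat.mod_lt _ hm, ?_⟩
    have hd : d.val ≡ (c - d).val [MOD m] := h ▸ Nat.mod_modEq _ m
    rw [two_mul]
    exact (hd.add_right _).trans hsum
  · rintro ⟨hdm, h2⟩
    have hd : (c - d).val ≡ d.val [MOD m] :=
      Nat.ModEq.add_right_cancel' d.val (hsum.trans (two_mul d.val ▸ h2).symm)
    rw [hd, Nat.mod_eq_of_lt hdm]

theorem ZMod.existsUnique_val {n : ℕ} [NeZero n] {P : ℕ → Prop} (h : ∃! t, P t)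
    (hlt : ∀ t, P t → t < n) : ∃! d : ZMod n, P d.val := by
  obtain ⟨t, ht, huniq⟩ := h
  refine ⟨t, ?_, fun d hd => ?_⟩
  · simpa only [ZMod.val_cast_of_lt (hlt t ht)] using ht
  · rw [← huniq _ hd, ZMod.natCast_zmod_val]

theorem odd_equal_gaps_regular_general (m s : ℕ) (hs : 0 < s) (hodd : Odd m)
    (r : ℕ) (hr : r = m * s) (g : ZMod r) :
    ∀ w : ZMod r, ∃! w' : ZMod r, (w - w').val = (w' - 1 - g).val % m := by
  subst hr
  have : NeZero (m * s) := ⟨(Nat.mul_pos hodd.pos hs).ne'⟩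
  intro w
  have hiff (w' : ZMod (m * s)) : (w - w').val = (w' - 1 - g).val % m ↔
      (w - w').val < m ∧ 2 * (w - w').val ≡ (w - 1 - g).val [MOD m] := by
    rw [show w' - 1 - g = w - 1 - g - (w - w') by ring]
    exact ZMod.val_eq_val_sub_mod_iff (dvd_mul_right m s) _ _
  rw [(Equiv.subLeft w).existsUnique_congr
    (q := fun d => d.val < m ∧ 2 * d.val ≡ (w - 1 - g).val [MOD m]) hiff]
  exact ZMod.existsUnique_val (Nat.existsUnique_lt_two_mul_modEq hodd _)
    fun t ht => ht.1.trans_le (Nat.le_mul_of_pos_right m hs)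

/-- If `m` is odd, `s > 0`, `r = m * s` and `Γ = {g, g+m, …, g+(s-1)m} ⊆ ℤ/rℤ`
(so all intervals between consecutive elements of `Γ` have the same odd length `m`,
and `t⁺(x) = (x - g).val % m`), then for every `w ∈ ℤ/rℤ` there is exactly one
`w' ∈ ℤ/rℤ` with `(w - w').val = ((w' - 1 - g).val % m)`; in particular the sparse
datum with support `Γ` is regular. -/
theorem odd_equal_gaps_regular (m s : ℕ) (hm : 0 < m) (hs : 0 < s) (hodd : Odd m)
    (r : ℕ) (hr : r = m * s) (g : ZMod r) :
    ∀ w : ZMod r, ∃! w' : ZMod r, (w - w').val = (w' - 1 - g).val % m :=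
  odd_equal_gaps_regular_general m s hs hodd r hr g
end
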